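/- arXiv:2106.10389 — 3 statements merged into one kernel-verified Lean document; each statement's English description precedes it below -/
import Mathlib

section
/- Let F:[0,∞)→[0,∞) be a non-increasing right-continuous function with lim_{l→∞} F(l)=0. Suppose there exist α>0 and A>0 such that for all l≥0 and all r∈[0,1], r·F(l+r) ≤ A·F(l)^{1+α}. Then there exists S>0 such that F(l)=0 for all l≥S. -/
open Filter Set

/-- De Giorgi-type iteration lemma: a non-increasing right-continuous `F` on `[0,∞)`
tending to `0` at infinity and satisfying `r · F(l+r) ≤ A · F(l)^{1+α}` vanishes
beyond some `S > 0`. -/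
theorem deGiorgi_iteration (F : ℝ → ℝ) (A α : ℝ) (hA : 0 < A) (hα : 0 < α)
    (hnonneg : ∀ l ≥ (0:ℝ), 0 ≤ F l)
    (hmono : AntitoneOn F (Ici 0))
    (hrc : ∀ l ≥ (0:ℝ), ContinuousWithinAt F (Ici l) l)
    (hlim : Tendsto F atTop (nhds 0))
    (hiter : ∀ l ≥ (0:ℝ), ∀ r ∈ Icc (0:ℝ) 1, r * F (l + r) ≤ A * (F l) ^ (1 + α)) :
    ∃ S > (0:ℝ), ∀ l ≥ S, F l = 0 := by
  have h2 : (0:ℝ) < 2 := by norm_num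
  set θ : ℝ := (2:ℝ) ^ (-(2/α)) with hθdef
  have hθpos : 0 < θ := Real.rpow_pos_of_pos h2 _
  have hθlt1 : θ < 1 :=
    Real.rpow_lt_one_of_one_lt_of_neg (by norm_num) (neg_lt_zero.mpr (by positivity))
  set ε : ℝ := (1 / (2 * A * (2:ℝ) ^ (2/α))) ^ (1/α) with hεdef
  have hden : (0:ℝ) < 2 * A * (2:ℝ) ^ (2/α) := by positivity
  have hεpos : 0 < ε := Real.rpow_pos_of_pos (by positivity) _
  obtain ⟨l₀, hl₀1, hl₀ε⟩ :=
    ((eventually_ge_atTop (1:ℝ)).and (hlim.eventually (gt_mem_nhds hεpos))).exists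
  have hl₀0 : (0:ℝ) ≤ l₀ := by linarith
  set a0 : ℝ := F l₀ with ha0def
  have ha0 : 0 ≤ a0 := hnonneg l₀ hl₀0
  -- key smallness: A * 2 * a0 ^ α ≤ θ
  have hεα : ε ^ α = 1 / (2 * A * (2:ℝ) ^ (2/α)) := by
    rw [hεdef, ← Real.rpow_mul (le_of_lt (by positivity))]
    rw [one_div α, inv_mul_cancel₀ (ne_of_gt hα), Real.rpow_one]
  have ha0α : a0 ^ α ≤ ε ^ α :=
    Real.rpow_le_rpow ha0 (le_of_lt hl₀ε) (le_of_lt hα)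
  have hsmall : A * 2 * a0 ^ α ≤ θ := by
    have hθeq : θ = A * 2 * (1 / (2 * A * (2:ℝ) ^ (2/α))) := by
      rw [hθdef, Real.rpow_neg (le_of_lt h2)]
      field_simp
    rw [hθeq]
    have := mul_le_mul_of_nonneg_left (ha0α.trans_eq hεα) (le_of_lt (by positivity : (0:ℝ) < A * 2))
    linarith
  -- the iteration points
  have hhalf : ∀ k : ℕ, (0:ℝ) < (1/2:ℝ)^k := fun k => by positivity
  have hhalf1 : ∀ k : ℕ, ((1/2:ℝ))^k ≤ 1 := fun k =>
    pow_le_one₀ (by norm_num) (by norm_num)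
  have hlk0 : ∀ k : ℕ, (0:ℝ) ≤ l₀ + 1 - (1/2:ℝ)^k := fun k => by
    have := hhalf1 k; linarith
  -- θ^k as rpow
  have hθk : ∀ k : ℕ, θ ^ k = (2:ℝ) ^ (-(2/α) * k) := fun k => by
    rw [hθdef, ← Real.rpow_natCast ((2:ℝ) ^ (-(2/α))) k,
      ← Real.rpow_mul (le_of_lt h2)]
  have hind : ∀ k : ℕ, F (l₀ + 1 - (1/2:ℝ)^k) ≤ a0 * θ ^ k := by
    intro k
    induction k with
    | zero => simp [ha0def]
    | succ k ih =>
      set lk : ℝ := l₀ + 1 - (1/2:ℝ)^k with hlkdef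
      have hlknn : (0:ℝ) ≤ lk := hlk0 k
      have hr : (1/2:ℝ)^(k+1) ∈ Icc (0:ℝ) 1 := ⟨le_of_lt (hhalf (k+1)), hhalf1 (k+1)⟩
      have hstep := hiter lk hlknn _ hr
      have hlk1 : lk + (1/2:ℝ)^(k+1) = l₀ + 1 - (1/2:ℝ)^(k+1) := by
        rw [hlkdef, pow_succ]; ring
      rw [hlk1] at hstep
      -- F (l_{k+1}) ≤ A * 2^(k+1) * (F lk)^(1+α)
      have hFk1 : F (l₀ + 1 - (1/2:ℝ)^(k+1)) ≤ A * 2^(k+1) * (F lk) ^ (1+α) := by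
        have h1 : (0:ℝ) < (1/2:ℝ)^(k+1) := hhalf (k+1)
        rw [← le_div_iff₀' h1] at hstep
        calc F (l₀ + 1 - (1/2:ℝ)^(k+1)) ≤ A * (F lk) ^ (1+α) / (1/2:ℝ)^(k+1) := hstep
          _ = A * 2^(k+1) * (F lk) ^ (1+α) := by
              rw [one_div, inv_pow, div_inv_eq_mul]
              ring
      -- bound (F lk)^(1+α) by (a0 θ^k)^(1+α)
      have hFlknn : 0 ≤ F lk := hnonneg lk hlknn
      have hpow : (F lk) ^ (1+α) ≤ (a0 * θ^k) ^ ((1:ℝ)+α) :=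
        Real.rpow_le_rpow hFlknn ih (by linarith)
      -- main computation
      have hmain : A * 2^(k+1) * (a0 * θ^k) ^ ((1:ℝ)+α) ≤ a0 * θ^(k+1) := by
        rcases eq_or_lt_of_le ha0 with h0 | h0
        · rw [← h0]
          rw [zero_mul, Real.zero_rpow (by positivity), mul_zero, zero_mul]
        · have hθkpos : (0:ℝ) < θ ^ k := pow_pos hθpos k
          have hbpos : (0:ℝ) < a0 * θ^k := mul_pos h0 hθkpos
          have e1 : (a0 * θ^k) ^ ((1:ℝ)+α) = (a0 * θ^k) * (a0^α * (θ^k)^α) := by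
            rw [Real.rpow_add hbpos, Real.rpow_one,
              Real.mul_rpow (le_of_lt h0) (le_of_lt hθkpos)]
          have e2 : ((θ:ℝ)^k) ^ α = (2:ℝ) ^ (-(2:ℝ)*k) := by
            rw [hθk k, ← Real.rpow_mul (le_of_lt h2)]
            congr 1
            field_simp
          have e3 : ((2:ℝ))^(k+1) = (2:ℝ) ^ ((k:ℝ)+1) := by
            rw [← Real.rpow_natCast (2:ℝ) (k+1)]
            push_cast; ring_nf
          rw [e1, e2, e3, hθk k, hθk (k+1)]
          -- LHS = A * 2^(k+1:ℝ) * (a0 * 2^(-(2/α)k)) * (a0^α * 2^(-2k))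
          -- ≤ a0 * 2^(-(2/α)(k+1))
          have key : A * 2 * a0^α * (2:ℝ)^((k:ℝ)+1) * (2:ℝ)^(-(2:ℝ)*k)
              ≤ (2:ℝ) * (2:ℝ)^(-(2/α)) := by
            have p1 : ((2:ℝ))^((k:ℝ)+1) * (2:ℝ)^(-(2:ℝ)*k) = (2:ℝ)^((1:ℝ)-k) := by
              rw [← Real.rpow_add h2]; ring_nf
            have p2 : ((2:ℝ))^((1:ℝ)-k) ≤ 2 := by
              have hk : ((1:ℝ)-k) ≤ 1 := by
                have : (0:ℝ) ≤ (k:ℝ) := Nat.cast_nonneg k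
                linarith
              have := Real.rpow_le_rpow_of_exponent_le
                (by norm_num : (1:ℝ) ≤ 2) hk
              simpa using this
            calc A * 2 * a0^α * (2:ℝ)^((k:ℝ)+1) * (2:ℝ)^(-(2:ℝ)*k)
                = (A * 2 * a0^α) * ((2:ℝ)^((k:ℝ)+1) * (2:ℝ)^(-(2:ℝ)*k)) := by ring
              _ ≤ θ * 2 := by
                  rw [p1]
                  exact mul_le_mul hsmall p2 (by positivity) (le_of_lt hθpos)
              _ = (2:ℝ) * (2:ℝ)^(-(2/α)) := by rw [hθdef]; ring
          -- combine
          have hcomb : A * (2:ℝ)^((k:ℝ)+1) * (a0 * (2:ℝ)^(-(2/α)*k)) *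
              (a0^α * (2:ℝ)^(-(2:ℝ)*k)) ≤ a0 * (2:ℝ)^(-(2/α)*(k+1:ℕ)) := by
            have hmul := mul_le_mul_of_nonneg_right key
              (le_of_lt (mul_pos h0 (Real.rpow_pos_of_pos h2 (-(2/α)*k))))
            calc A * (2:ℝ)^((k:ℝ)+1) * (a0 * (2:ℝ)^(-(2/α)*k)) *
                (a0^α * (2:ℝ)^(-(2:ℝ)*k))
                = (A * 2 * a0^α * (2:ℝ)^((k:ℝ)+1) * (2:ℝ)^(-(2:ℝ)*k)) *
                  (a0 * (2:ℝ)^(-(2/α)*k)) / 2 := by ring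
              _ ≤ ((2:ℝ) * (2:ℝ)^(-(2/α))) * (a0 * (2:ℝ)^(-(2/α)*k)) / 2 := by
                  apply div_le_div_of_nonneg_right hmul (by norm_num) |>.trans_eq rfl
              _ = a0 * ((2:ℝ)^(-(2/α)) * (2:ℝ)^(-(2/α)*k)) := by ring
              _ = a0 * (2:ℝ)^(-(2/α)*(k+1:ℕ)) := by
                  rw [← Real.rpow_add h2]
                  push_cast
                  ring_nf
          calc A * (2:ℝ)^((k:ℝ)+1) * (a0 * (2:ℝ)^(-(2/α)*(k:ℝ)) *
                (a0^α * (2:ℝ)^(-(2:ℝ)*k)))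
              = A * (2:ℝ)^((k:ℝ)+1) * (a0 * (2:ℝ)^(-(2/α)*(k:ℝ))) *
                (a0^α * (2:ℝ)^(-(2:ℝ)*k)) := by ring
            _ ≤ a0 * (2:ℝ)^(-(2/α)*(k+1:ℕ)) := hcomb
      calc F (l₀ + 1 - (1/2:ℝ)^(k+1)) ≤ A * 2^(k+1) * (F lk) ^ (1+α) := hFk1
        _ ≤ A * 2^(k+1) * (a0 * θ^k) ^ ((1:ℝ)+α) := by
            apply mul_le_mul_of_nonneg_left hpow (by positivity)
        _ ≤ a0 * θ^(k+1) := hmain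
  -- conclude
  refine ⟨l₀ + 1, by linarith, ?_⟩
  have hFS : F (l₀ + 1) = 0 := by
    have hle : ∀ k : ℕ, F (l₀ + 1) ≤ a0 * θ^k := by
      intro k
      have h1 : l₀ + 1 - (1/2:ℝ)^k ≤ l₀ + 1 := by
        have := hhalf k; linarith
      exact (hmono (mem_Ici.mpr (hlk0 k)) (mem_Ici.mpr (by linarith)) h1).trans (hind k)
    have htend : Tendsto (fun k : ℕ => a0 * θ^k) atTop (nhds 0) := by
      have := tendsto_pow_atTop_nhds_zero_of_lt_one (le_of_lt hθpos) hθlt1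
      simpa using this.const_mul a0
    have h1 : F (l₀ + 1) ≤ 0 := ge_of_tendsto htend (Eventually.of_forall hle)
    exact le_antisymm h1 (hnonneg _ (by linarith))
  intro l hl
  have h1 : F l ≤ F (l₀ + 1) :=
    hmono (mem_Ici.mpr (by linarith)) (mem_Ici.mpr (by linarith)) hl
  exact le_antisymm (hFS ▸ h1) (hnonneg l (by linarith))
end

section
/- Let M be the Hermitian n×n matrix with (1,1)-entry a + Σ_{j=1}^{n-1} |u_j|², (1,j+1)-entry u_j z̄, (j+1,1)-entry ū_j z, and lower-right block |z|² Id_{n-1}, where a ≥ |z|². Then M is positive semidefinite, and consequently M − min(a − |z|², 0)·E₁₁ ⪰ 0, where E₁₁ is the matrix unit. -/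
/-!
Splitting the corner entry as `a + Σ |u_j|²`, the matrix is `a E₁₁ + Gᴴ G` for the
`(n-1) × n` matrix `G = [ū | z̄ · 1]`: a nonnegative corner plus a Gram matrix.
Since `a ≥ |z|²`, the correction `min (a - |z|², 0)` vanishes.
-/

open Matrix
open scoped ComplexOrder
noncomputable section

namespace Matrix.PosSemidef

variable {R : Type*} [CommRing R] [PartialOrder R] [StarRing R]
  {m n p : Type*} [Fintype m] [Fintype n] [Fintype p]

theorem fromBlocks_zero {A : Matrix n n R} (hA : A.PosSemidef) :
    (fromBlocks A 0 0 (0 : Matrix p p R)).PosSemidef := by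
  classical
  have h := hA.conjTranspose_mul_mul_same (fromCols (1 : Matrix n n R) (0 : Matrix n p R))
  rw [conjTranspose_fromCols_eq_fromRows_conjTranspose, Matrix.mul_assoc, mul_fromCols,
    fromRows_mul_fromCols] at h
  simpa using h

theorem fromBlocks_add_conjTranspose_mul_self [StarOrderedRing R] {A : Matrix n n R}
    (hA : A.PosSemidef) (C : Matrix m n R) (D : Matrix m p R) :
    (fromBlocks (A + Cᴴ * C) (Cᴴ * D) (Dᴴ * C) (Dᴴ * D)).PosSemidef := by
  have hsplit : fromBlocks (A + Cᴴ * C) (Cᴴ * D) (Dᴴ * C) (Dᴴ * D) =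
      fromBlocks A 0 0 (0 : Matrix p p R) + (fromCols C D)ᴴ * fromCols C D := by
    rw [conjTranspose_fromCols_eq_fromRows_conjTranspose, fromRows_mul_fromCols, fromBlocks_add]
    simp only [zero_add]
  exact hsplit ▸ hA.fromBlocks_zero.add (posSemidef_conjTranspose_mul_self _)

end Matrix.PosSemidef

/-- The Hermitian matrix `M` with (1,1)-entry `a + Σ|u_j|²`, first row `u_j z̄`
(resp. conjugates in the first column), and lower-right block `|z|² Id`, where
`a ≥ |z|²`, is positive semidefinite; consequently `M - min(a - |z|², 0)·E₁₁ ⪰ 0`. -/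
theorem blowup_coefficient_matrix_psd_general (k : ℕ) (a : ℝ) (z : ℂ) (u : Fin k → ℂ)
    (ha : ‖z‖ ^ 2 ≤ a) :
    (Matrix.fromBlocks
      (Matrix.of fun (_ : Unit) (_ : Unit) => ((a + ∑ j, ‖u j‖ ^ 2 : ℝ) : ℂ))
      (Matrix.of fun (_ : Unit) (j : Fin k) => u j * (starRingEnd ℂ) z)
      (Matrix.of fun (i : Fin k) (_ : Unit) => (starRingEnd ℂ) (u i) * z)
      ((‖z‖ ^ 2 : ℝ) • (1 : Matrix (Fin k) (Fin k) ℂ))).PosSemidef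
    ∧ ((Matrix.fromBlocks
      (Matrix.of fun (_ : Unit) (_ : Unit) => ((a + ∑ j, ‖u j‖ ^ 2 : ℝ) : ℂ))
      (Matrix.of fun (_ : Unit) (j : Fin k) => u j * (starRingEnd ℂ) z)
      (Matrix.of fun (i : Fin k) (_ : Unit) => (starRingEnd ℂ) (u i) * z)
      ((‖z‖ ^ 2 : ℝ) • (1 : Matrix (Fin k) (Fin k) ℂ)))
      - ((min (a - ‖z‖ ^ 2) 0 : ℝ) : ℂ) •
          Matrix.single (Sum.inl ()) (Sum.inl ()) (1 : ℂ)).PosSemidef := by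
  have ha₀ : (0 : ℂ) ≤ (a : ℂ) := Complex.zero_le_real.mpr ((sq_nonneg ‖z‖).trans ha)
  have hcorner : (diagonal fun _ : Unit => (a : ℂ)).PosSemidef := .diagonal fun _ => ha₀
  have hpsd := hcorner.fromBlocks_add_conjTranspose_mul_self
    (of fun i (_ : Unit) => (starRingEnd ℂ) (u i))
    ((starRingEnd ℂ) z • (1 : Matrix (Fin k) (Fin k) ℂ))
  rw [min_eq_right (sub_nonneg.mpr ha), Complex.ofReal_zero, zero_smul, sub_zero, and_self]
  convert hpsd using 2 <;> ext <;> simp [mul_apply, one_apply, mul_comm, Complex.mul_conj']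
end
end

section
/- Combining the capacity–measure inequality t·F(l+t) ≤ A·F(l)² (where F(l) := Cap_{θ_s}({φ_s < −l}, U)^{1/n}), the decay F(l) → 0 as l → ∞ uniformly in s, and the De Giorgi iteration lemma, one obtains a uniform bound: there exists S independent of s ∈ (0,1) such that φ_s ≥ −S on U. -/
/-!
Iterate the inequality `t · F(l + t) ≤ A · F(l)²` along the levels `l_k = L + 1 - 2⁻ᵏ`, starting
from a level `L` where `F(L) ≤ 1/(8A)`, which uniform decay provides for every `s` at once.
Squaring turns the bound `F(l_k) ≤ 4⁻ᵏ/(8A)` into `F(l_{k+1}) ≤ 4⁻⁽ᵏ⁺¹⁾/(8A)` even after dividing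
by the step `2⁻⁽ᵏ⁺¹⁾`, so `F(L + 1) = 0`, whence `φ_s ≥ -(L + 1)`.
-/

noncomputable section
open Complex MeasureTheory Set Filter Metric ENNReal
open scoped ComplexOrder

/-- `ℂⁿ`. -/
abbrev Cn (n : ℕ) := Fin n → ℂ

/-- Real second derivative `D²f(x)(v,w)`. -/
def d2 {n : ℕ} (f : Cn n → ℝ) (x v w : Cn n) : ℝ :=
  fderiv ℝ (fun y => fderiv ℝ f y w) x v

/-- The coefficient `∂∂̄f(x)(v, w̄)` of the complex Hessian (Levi form) of `f`. -/
def levi {n : ℕ} (f : Cn n → ℝ) (x v w : Cn n) : ℂ :=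
  (1 / 4 : ℂ) * (((d2 f x v w + d2 f x (Complex.I • v) (Complex.I • w) : ℝ) : ℂ)
    + Complex.I * ((d2 f x (Complex.I • v) w - d2 f x v (Complex.I • w) : ℝ) : ℂ))

/-- The matrix `(∂_i ∂̄_j f)(x)` of the Levi form in the standard coordinates. -/
def leviMatrix {n : ℕ} (f : Cn n → ℝ) (x : Cn n) : Matrix (Fin n) (Fin n) ℂ :=
  Matrix.of fun i j => levi f x (Pi.single i 1) (Pi.single j 1)

/-- `u` is a smooth `θ`-plurisubharmonic function on `U`: `θ + i∂∂̄u ≥ 0` on `U`. -/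
def PSHOn {n : ℕ} (θ : Cn n → Matrix (Fin n) (Fin n) ℂ) (u : Cn n → ℝ)
    (U : Set (Cn n)) : Prop :=
  ContDiffOn ℝ 2 u U ∧ ∀ x ∈ U, (θ x + leviMatrix u x).PosSemidef

/-- The Monge–Ampère measure `(θ + i∂∂̄u)ⁿ` of `u` on `U`, as the measure with density
`det(θ + i∂∂̄u)` against Lebesgue measure. -/
def MAm {n : ℕ} (θ : Cn n → Matrix (Fin n) (Fin n) ℂ) (u : Cn n → ℝ)
    (U : Set (Cn n)) : Measure (Cn n) :=
  (volume.restrict U).withDensity fun x => ENNReal.ofReal ((θ x + leviMatrix u x).det.re)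

/-- The relative Monge–Ampère capacity
`Cap_θ(K,U) = sup{∫_K (θ+i∂∂̄u)ⁿ : u θ-psh on U, −1 < u < 0}`. -/
def Cap {n : ℕ} (θ : Cn n → Matrix (Fin n) (Fin n) ℂ) (U K : Set (Cn n)) : ℝ≥0∞ :=
  ⨆ u ∈ {u : Cn n → ℝ | PSHOn θ u U ∧ ∀ x ∈ U, u x ∈ Ioo (-1 : ℝ) 0}, MAm θ u U K

open Topology

namespace DeGiorgi

lemma sq_bound_le_mul {A t : ℝ} (hA : 0 < A) (k : ℕ) (ht : (1 / 2) ^ (k + 1) ≤ t) :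
    A * ((1 / 4) ^ k / (8 * A)) ^ 2 ≤ t * ((1 / 4) ^ (k + 1) / (8 * A)) := by
  calc A * ((1 / 4) ^ k / (8 * A)) ^ 2 = (1 / 16) ^ k / (64 * A) := by
        rw [show ((1 : ℝ) / 16) = (1 / 4) ^ 2 by norm_num, ← pow_mul, mul_comm 2 k, pow_mul]
        field_simp; ring
    _ ≤ (1 / 8) ^ k / (64 * A) := by gcongr; norm_num
    _ = (1 / 2) ^ (k + 1) * ((1 / 4) ^ (k + 1) / (8 * A)) := by
        rw [show ((1 : ℝ) / 8) = 1 / 2 * (1 / 4) by norm_num, mul_pow]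
        field_simp; ring
    _ ≤ t * ((1 / 4) ^ (k + 1) / (8 * A)) := by gcongr

variable {F : ℝ → ℝ≥0∞} {A L : ℝ}

lemma le_ofReal_of_mul_le_sq {l t b b' : ℝ} (ht : 0 < t) (hb : 0 ≤ b) (hbb' : A * b ^ 2 ≤ t * b')
    (hstep : ENNReal.ofReal t * F (l + t) ≤ ENNReal.ofReal A * F l ^ 2)
    (hF : F l ≤ ENNReal.ofReal b) : F (l + t) ≤ ENNReal.ofReal b' := by
  refine (ENNReal.mul_le_mul_iff_right (ENNReal.ofReal_pos.mpr ht).ne' ofReal_ne_top).mp ?_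
  calc ENNReal.ofReal t * F (l + t) ≤ ENNReal.ofReal A * ENNReal.ofReal b ^ 2 := by
        grw [hstep, hF]
    _ = ENNReal.ofReal (A * b ^ 2) := by
        rw [← ENNReal.ofReal_pow hb, ← ENNReal.ofReal_mul' (by positivity)]
    _ ≤ ENNReal.ofReal (t * b') := ENNReal.ofReal_le_ofReal hbb'
    _ = ENNReal.ofReal t * ENNReal.ofReal b' := ENNReal.ofReal_mul ht.le

variable (hA : 0 < A) (hstep : ∀ l ≥ L, ∀ t ∈ Icc (0 : ℝ) 1,
  ENNReal.ofReal t * F (l + t) ≤ ENNReal.ofReal A * F l ^ 2)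
include hA hstep

lemma le_succ_bound {k : ℕ} {l t : ℝ} (hl : L ≤ l) (ht : (1 / 2) ^ (k + 1) ≤ t) (ht1 : t ≤ 1)
    (hF : F l ≤ ENNReal.ofReal ((1 / 4) ^ k / (8 * A))) :
    F (l + t) ≤ ENNReal.ofReal ((1 / 4) ^ (k + 1) / (8 * A)) := by
  have ht0 : 0 < t := lt_of_lt_of_le (by positivity) ht
  exact le_ofReal_of_mul_le_sq ht0 (by positivity) (sq_bound_le_mul hA k ht)
    (hstep l hl t ⟨ht0.le, ht1⟩) hF

lemma le_bound_dyadic_level (hL : F L ≤ ENNReal.ofReal (1 / (8 * A))) (k : ℕ) :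
    F (L + 1 - (1 / 2) ^ k) ≤ ENNReal.ofReal ((1 / 4) ^ k / (8 * A)) := by
  induction k with
  | zero => simpa using hL
  | succ k ih =>
    have hlevel : L + 1 - (1 / 2) ^ k + (1 / 2) ^ (k + 1) = L + 1 - (1 / 2) ^ (k + 1) := by ring
    rw [← hlevel]
    refine le_succ_bound hA hstep ?_ le_rfl (pow_le_one₀ (by norm_num) (by norm_num)) ih
    linarith [pow_le_one₀ (n := k) (by norm_num : (0 : ℝ) ≤ 1 / 2) (by norm_num)]

theorem eq_zero_of_mul_le_sq (hL : F L ≤ ENNReal.ofReal (1 / (8 * A))) : F (L + 1) = 0 := by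
  -- The last jump, from `L + 1 - 2⁻ᵏ` to `L + 1`, is one more step, so `F` need not be monotone.
  have hbound (k : ℕ) : F (L + 1) ≤ ENNReal.ofReal ((1 / 4) ^ (k + 1) / (8 * A)) := by
    have hfinal := le_succ_bound hA hstep (l := L + 1 - (1 / 2) ^ k) (t := (1 / 2) ^ k)
      (by linarith [pow_le_one₀ (n := k) (by norm_num : (0 : ℝ) ≤ 1 / 2) (by norm_num)])
      (pow_le_pow_of_le_one (by norm_num) (by norm_num) k.le_succ)
      (pow_le_one₀ (by norm_num) (by norm_num)) (le_bound_dyadic_level hA hstep hL k)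
    rwa [sub_add_cancel] at hfinal
  have hlim : Tendsto (fun k : ℕ => ENNReal.ofReal ((1 / 4) ^ (k + 1) / (8 * A))) atTop (𝓝 0) := by
    rw [← ENNReal.ofReal_zero, ← zero_div (8 * A)]
    refine ENNReal.tendsto_ofReal (((_root_.tendsto_pow_atTop_nhds_zero_of_lt_one ?_ ?_).comp
      (tendsto_add_atTop_nat 1)).div_const _) <;> norm_num
  exact le_antisymm (ge_of_tendsto' hlim hbound) bot_le

end DeGiorgi

theorem uniform_lower_bound_general {n : ℕ} (U : Set (Cn n))
    (φ : ℝ → Cn n → ℝ)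
    (A : ℝ) (hA : 0 < A)
    (F : ℝ → ℝ → ℝ≥0∞)
    (hineq : ∀ s ∈ Ioo (0:ℝ) 1, ∀ l ≥ (0:ℝ), ∀ t ∈ Icc (0:ℝ) 1,
      ENNReal.ofReal t * F s (l + t) ≤ ENNReal.ofReal A * F s l ^ 2)
    (hdecay : ∀ ε : ℝ≥0∞, 0 < ε → ∃ l₀ : ℝ, ∀ s ∈ Ioo (0:ℝ) 1, ∀ l ≥ l₀, F s l ≤ ε)
    (hempty : ∀ s ∈ Ioo (0:ℝ) 1, ∀ l : ℝ, F s l = 0 → ∀ x ∈ U, -l ≤ φ s x) :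
    ∃ S : ℝ, ∀ s ∈ Ioo (0:ℝ) 1, ∀ x ∈ U, -S ≤ φ s x := by
  obtain ⟨l₀, hl₀⟩ := hdecay (ENNReal.ofReal (1 / (8 * A))) (by simpa using hA)
  refine ⟨max l₀ 0 + 1, fun s hs => hempty s hs _ ?_⟩
  exact DeGiorgi.eq_zero_of_mul_le_sq hA
    (fun l hl => hineq s hs l ((le_max_right _ _).trans hl)) (hl₀ s hs _ (le_max_left _ _))

/-- Uniform `C⁰` bound via De Giorgi iteration: with
`F(s,l) = Cap_{θ_s}({φ_s < -l},U)^{1/n}` satisfying `t·F(l+t) ≤ A·F(l)²` and decaying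
to `0` uniformly in `s`, and vanishing capacity forcing emptiness of the sublevel set,
there is `S` independent of `s ∈ (0,1)` with `φ_s ≥ -S` on `U`. -/
theorem uniform_lower_bound {n : ℕ} (U : Set (Cn n)) (hUo : IsOpen U)
    (hUb : Bornology.IsBounded U)
    (ω θ : Cn n → Matrix (Fin n) (Fin n) ℂ)
    (hω : ∀ x ∈ U, (ω x).PosSemidef) (hθ : ∀ x ∈ U, (θ x).PosDef)
    (φ : ℝ → Cn n → ℝ)
    (hpsh : ∀ s ∈ Ioo (0:ℝ) 1, PSHOn (fun x => ω x + (s : ℂ) • θ x) (φ s) U)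
    (hbdry : ∀ s ∈ Ioo (0:ℝ) 1, ∀ z ∈ frontier U,
      Tendsto (φ s) (nhdsWithin z U) (nhds 0))
    (A : ℝ) (hA : 0 < A)
    (F : ℝ → ℝ → ℝ≥0∞)
    (hF : ∀ s l, F s l
      = Cap (fun x => ω x + (s : ℂ) • θ x) U {x ∈ U | φ s x < -l} ^ (1 / (n : ℝ)))
    (hineq : ∀ s ∈ Ioo (0:ℝ) 1, ∀ l ≥ (0:ℝ), ∀ t ∈ Icc (0:ℝ) 1,
      ENNReal.ofReal t * F s (l + t) ≤ ENNReal.ofReal A * F s l ^ 2)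
    (hdecay : ∀ ε : ℝ≥0∞, 0 < ε → ∃ l₀ : ℝ, ∀ s ∈ Ioo (0:ℝ) 1, ∀ l ≥ l₀, F s l ≤ ε)
    (hempty : ∀ s ∈ Ioo (0:ℝ) 1, ∀ l : ℝ, F s l = 0 → ∀ x ∈ U, -l ≤ φ s x) :
    ∃ S : ℝ, ∀ s ∈ Ioo (0:ℝ) 1, ∀ x ∈ U, -S ≤ φ s x :=
  uniform_lower_bound_general U φ A hA F hineq hdecay hempty
end
end
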